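/- arXiv:1908.10467 — 3 statements merged into one kernel-verified Lean document; each statement's English description precedes it below -/
import Mathlib

section
/- For every natural number n, the supremum of |P_n(z)| over the closed unit disk {z ∈ ℂ : |z| ≤ 1} is attained at z = ±i, and equals 2^{-n} Σ_{k=0}^{⌊n/2⌋} C(n,k)·C(2n-2k,n). -/
open scoped Nat

/-- The `n`-th Legendre polynomial (as an entire function), via the Rodrigues formula. -/
noncomputable def legendre (n : ℕ) (z : ℂ) : ℂ :=
  (1 / (2 ^ n * (n ! : ℂ))) * iteratedDeriv n (fun w : ℂ => (w ^ 2 - 1) ^ n) z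

open Polynomial Finset Complex

lemma iteratedDeriv_polyEval (p : ℂ[X]) (k : ℕ) :
    iteratedDeriv k (fun w : ℂ => p.eval w) = fun w => (Polynomial.derivative^[k] p).eval w := by
  induction k with
  | zero => simp
  | succ k ih =>
    rw [iteratedDeriv_succ, ih]
    funext w
    rw [Function.iterate_succ_apply']
    exact Polynomial.deriv _

lemma poly_expand (n : ℕ) : ((X : ℂ[X]) ^ 2 - 1) ^ n
    = ∑ k ∈ range (n + 1), C ((-1 : ℂ) ^ k * (n.choose k : ℂ)) * X ^ (2 * (n - k)) := by
  rw [sub_eq_add_neg, add_pow, ← Finset.sum_range_reflect]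
  refine Finset.sum_congr rfl fun k hk => ?_
  rw [Finset.mem_range, Nat.lt_succ_iff] at hk
  simp only [Nat.add_sub_cancel]
  rw [Nat.choose_symm hk, Nat.sub_sub_self hk]
  simp only [map_mul, map_pow, map_neg, map_one, map_natCast]
  ring

lemma legendre_eq_sum (n : ℕ) (z : ℂ) :
    legendre n z = (2 : ℂ)⁻¹ ^ n * ∑ k ∈ range (n / 2 + 1),
      (-1 : ℂ) ^ k * (n.choose k : ℂ) * ((2 * n - 2 * k).choose n : ℂ) * z ^ (n - 2 * k) := by
  have hfun : (fun w : ℂ => (w ^ 2 - 1) ^ n)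
      = fun w => Polynomial.eval w (((X : ℂ[X]) ^ 2 - 1) ^ n) := by
    funext w; simp
  unfold legendre
  rw [hfun, iteratedDeriv_polyEval, poly_expand, Polynomial.iterate_derivative_sum]
  simp only [Polynomial.iterate_derivative_C_mul,
    Polynomial.iterate_derivative_X_pow_eq_natCast_mul, eval_finset_sum, eval_mul, eval_C,
    eval_natCast, eval_pow, eval_X]
  rw [← Finset.sum_subset (Finset.range_subset_range.2 (by omega : n / 2 + 1 ≤ n + 1))
    (fun k hk hk2 => by
      rw [Finset.mem_range] at hk hk2
      have : 2 * (n - k) < n := by omega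
      rw [Nat.descFactorial_eq_zero_iff_lt.2 this]
      simp)]
  rw [Finset.mul_sum, Finset.mul_sum]
  refine Finset.sum_congr rfl fun k hk => ?_
  rw [Finset.mem_range] at hk
  have h1 : 2 * (n - k) - n = n - 2 * k := by omega
  have h2 : 2 * (n - k) = 2 * n - 2 * k := by omega
  have h3 : (Nat.descFactorial (2 * n - 2 * k) n : ℂ)
      = (n ! : ℂ) * ((2 * n - 2 * k).choose n : ℂ) := by
    rw [← Nat.cast_mul, Nat.descFactorial_eq_factorial_mul_choose]
  rw [h1, h2, h3]
  have hn : (n ! : ℂ) ≠ 0 := Nat.cast_ne_zero.2 n.factorial_ne_zero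
  have h2n : (2 : ℂ) ^ n ≠ 0 := pow_ne_zero _ two_ne_zero
  field_simp
  have h12 : ((1:ℂ) / 2) ^ n * 2 ^ n = 1 := by rw [← mul_pow]; norm_num
  linear_combination (-((n.choose k : ℂ) * ((2 * n - 2 * k).choose n : ℂ) * z ^ (n - 2 * k))) * h12

lemma legendre_abs_le (n : ℕ) (z : ℂ) (hz : ‖z‖ ≤ 1) :
    ‖legendre n z‖ ≤ (2 : ℝ)⁻¹ ^ n *
      ∑ k ∈ Finset.range (n / 2 + 1), (n.choose k : ℝ) * ((2 * n - 2 * k).choose n : ℝ) := by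
  rw [legendre_eq_sum]
  rw [norm_mul, norm_pow]
  have h2 : ‖(2 : ℂ)⁻¹‖ = (2 : ℝ)⁻¹ := by simp
  rw [h2]
  refine mul_le_mul_of_nonneg_left ?_ (by positivity)
  refine le_trans (norm_sum_le _ _) ?_
  refine Finset.sum_le_sum fun k hk => ?_
  simp only [norm_mul, norm_pow, Complex.norm_natCast]
  have : ‖(-1 : ℂ)‖ = 1 := by simp
  rw [this, one_pow, one_mul]
  refine mul_le_of_le_one_right (by positivity) ?_
  exact pow_le_one₀ (norm_nonneg z) hz

lemma legendre_at_I (n : ℕ) :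
    legendre n Complex.I = (2 : ℂ)⁻¹ ^ n * Complex.I ^ n *
      ((∑ k ∈ Finset.range (n / 2 + 1),
        (n.choose k : ℝ) * ((2 * n - 2 * k).choose n : ℝ) : ℝ) : ℂ) := by
  rw [legendre_eq_sum, mul_assoc]
  congr 1
  push_cast
  rw [Finset.mul_sum]
  refine Finset.sum_congr rfl fun k hk => ?_
  rw [Finset.mem_range] at hk
  have hIn : (Complex.I) ^ n = (-1 : ℂ) ^ k * Complex.I ^ (n - 2 * k) := by
    have h : n = (n - 2 * k) + 2 * k := by omega
    calc Complex.I ^ n = Complex.I ^ ((n - 2 * k) + 2 * k) := by rw [← h]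
    _ = Complex.I ^ (n - 2 * k) * (Complex.I ^ 2) ^ k := by rw [pow_add, pow_mul]
    _ = (-1 : ℂ) ^ k * Complex.I ^ (n - 2 * k) := by rw [Complex.I_sq]; ring
  rw [hIn]; ring

lemma legendre_at_negI (n : ℕ) :
    legendre n (-Complex.I) = (2 : ℂ)⁻¹ ^ n * (-Complex.I) ^ n *
      ((∑ k ∈ Finset.range (n / 2 + 1),
        (n.choose k : ℝ) * ((2 * n - 2 * k).choose n : ℝ) : ℝ) : ℂ) := by
  rw [legendre_eq_sum, mul_assoc]
  congr 1
  push_cast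
  rw [Finset.mul_sum]
  refine Finset.sum_congr rfl fun k hk => ?_
  rw [Finset.mem_range] at hk
  have hIn : (-Complex.I) ^ n = (-1 : ℂ) ^ k * (-Complex.I) ^ (n - 2 * k) := by
    have h : n = (n - 2 * k) + 2 * k := by omega
    have hsq : (-Complex.I) ^ 2 = -1 := by
      rw [neg_pow, Complex.I_sq]; ring
    calc (-Complex.I) ^ n = (-Complex.I) ^ ((n - 2 * k) + 2 * k) := by rw [← h]
    _ = (-Complex.I) ^ (n - 2 * k) * ((-Complex.I) ^ 2) ^ k := by rw [pow_add, pow_mul]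
    _ = (-1 : ℂ) ^ k * (-Complex.I) ^ (n - 2 * k) := by rw [hsq]; ring
  rw [hIn]; ring

/-- The supremum of `|P_n|` over the closed unit disk is attained at `z = ±i`, and equals
`2^{-n} Σ_{k=0}^{⌊n/2⌋} C(n,k) C(2n-2k,n)`. -/
theorem legendre_max_on_disk (n : ℕ) :
    IsMaxOn (fun z : ℂ => ‖legendre n z‖) (Metric.closedBall (0 : ℂ) 1)
      Complex.I ∧
    IsMaxOn (fun z : ℂ => ‖legendre n z‖) (Metric.closedBall (0 : ℂ) 1)
      (-Complex.I) ∧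
    ‖legendre n Complex.I‖ =
      (2 : ℝ) ^ (-(n : ℤ)) *
        ∑ k ∈ Finset.range (n / 2 + 1), (n.choose k : ℝ) * ((2 * n - 2 * k).choose n : ℝ) := by
  set S : ℝ := ∑ k ∈ Finset.range (n / 2 + 1),
    (n.choose k : ℝ) * ((2 * n - 2 * k).choose n : ℝ) with hS
  have hSnn : 0 ≤ S := Finset.sum_nonneg fun k _ => by positivity
  have habsI : ‖legendre n Complex.I‖ = (2 : ℝ)⁻¹ ^ n * S := by
    rw [legendre_at_I]
    simp only [norm_mul, norm_pow, Complex.norm_I, Complex.norm_real, Real.norm_eq_abs]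
    rw [← hS, _root_.abs_of_nonneg hSnn]
    simp
  have habsnI : ‖legendre n (-Complex.I)‖ = (2 : ℝ)⁻¹ ^ n * S := by
    rw [legendre_at_negI]
    simp only [norm_mul, norm_pow, norm_neg, Complex.norm_I, Complex.norm_real, Real.norm_eq_abs]
    rw [← hS, _root_.abs_of_nonneg hSnn]
    simp
  have hbound : ∀ z ∈ Metric.closedBall (0 : ℂ) 1,
      ‖legendre n z‖ ≤ (2 : ℝ)⁻¹ ^ n * S := by
    intro z hz
    rw [Metric.mem_closedBall, dist_zero_right] at hz
    exact legendre_abs_le n z hz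
  refine ⟨fun z hz => ?_, fun z hz => ?_, ?_⟩
  · simp only [Set.mem_setOf_eq, habsI]; exact hbound z hz
  · simp only [Set.mem_setOf_eq, habsnI]; exact hbound z hz
  · rw [habsI, zpow_neg, zpow_natCast, ← inv_pow]
end

section
/- For every natural number n and every complex z, the Legendre polynomial satisfies the Schläfli/Laplace-type integral representation P_n(z) = (1/π) ∫₀^π (z + √(z²-1) · cos t)ⁿ dt, where √(z²-1) denotes a fixed branch of the square root. -/
open scoped Nat

/-- Cauchy integral formula for the `n`-th derivative of an entire function. -/
lemma iteratedDeriv_eq_circleIntegral' {f : ℂ → ℂ} (hf : Differentiable ℂ f) (z : ℂ)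
    {R : ℝ} (hR : 0 < R) (n : ℕ) :
    iteratedDeriv n f z =
      (n ! : ℂ) * ((2 * Real.pi * Complex.I : ℂ)⁻¹ *
        ∮ w in C(z, R), ((1 : ℂ) / (w - z)) ^ n * ((w - z)⁻¹ * f w)) := by
  lift R to NNReal using hR.le with R' hR'
  have hR0 : 0 < R' := by exact_mod_cast hR
  have h := hf.hasFPowerSeriesOnBall z hR0
  have h1 := h.factorial_smul (1 : ℂ) n
  rw [iteratedDeriv_eq_iteratedFDeriv, ← h1, cauchyPowerSeries_apply]
  simp only [smul_eq_mul, nsmul_eq_mul]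

/-- The Schläfli contour computation for `z` with `z ^ 2 ≠ 1`, where `c` is any square root of
`z ^ 2 - 1`. -/
lemma legendre_main_ne (n : ℕ) (z c : ℂ) (hc2 : c ^ 2 = z ^ 2 - 1) (hc : c ≠ 0) :
    (1 / (2 ^ n * (n ! : ℂ))) * iteratedDeriv n (fun w : ℂ => (w ^ 2 - 1) ^ n) z =
      (1 / (Real.pi : ℂ)) * ∫ t in (0 : ℝ)..Real.pi, (z + c * (Real.cos t : ℂ)) ^ n := by
  set R : ℝ := ‖c‖ with hRdef
  have hR : 0 < R := norm_pos_iff.mpr hc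
  have hf : Differentiable ℂ (fun w : ℂ => (w ^ 2 - 1) ^ n) := by fun_prop
  set g : ℝ → ℂ := fun θ => (z + c * (Real.cos θ : ℂ)) ^ n with hg
  -- the circle integral computation
  have hcirc : (∮ w in C(z, R), ((1 : ℂ) / (w - z)) ^ n * ((w - z)⁻¹ * ((w ^ 2 - 1) ^ n)))
      = Complex.I * 2 ^ n * ∫ θ in (0:ℝ)..2 * Real.pi, g (θ - c.arg) := by
    rw [circleIntegral, ← intervalIntegral.integral_const_mul]
    refine intervalIntegral.integral_congr fun θ _ => ?_
    set E : ℂ := Complex.exp ((↑θ - ↑c.arg) * Complex.I) with hE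
    have hEne : E ≠ 0 := by rw [hE]; exact Complex.exp_ne_zero _
    have key1 : (R : ℂ) * Complex.exp (θ * Complex.I) = c * E := by
      have h0 : (R : ℂ) * Complex.exp (c.arg * Complex.I) = c := Complex.norm_mul_exp_arg_mul_I c
      calc (R : ℂ) * Complex.exp (θ * Complex.I)
          = ((R : ℂ) * Complex.exp (c.arg * Complex.I)) *
            Complex.exp ((↑θ - ↑c.arg) * Complex.I) := by
            rw [mul_assoc, ← Complex.exp_add]; congr 1; ring
        _ = c * E := by rw [h0, hE]
    have hEE' : E * Complex.exp (-(↑θ - ↑c.arg) * Complex.I) = 1 := by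
      rw [hE, ← Complex.exp_add]; ring_nf; exact Complex.exp_zero
    have key3 : ((z + c * E) ^ 2 - 1) = 2 * (c * E) * (z + c * (Real.cos (θ - c.arg) : ℂ)) := by
      have hcos : (Real.cos (θ - c.arg) : ℂ) =
          (E + Complex.exp (-(↑θ - ↑c.arg) * Complex.I)) / 2 := by
        rw [Complex.ofReal_cos, Complex.cos, hE]
        push_cast
        ring_nf
      rw [hcos]
      linear_combination -hc2 - c ^ 2 * hEE'
    have hcE : c * E ≠ 0 := mul_ne_zero hc hEne
    have hw0 : circleMap 0 R θ = c * E := by rw [circleMap, key1]; ring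
    have hw : circleMap z R θ = z + c * E := by rw [circleMap, key1]
    rw [deriv_circleMap, smul_eq_mul, hw0, hw, add_sub_cancel_left, key3, mul_pow, mul_pow,
      hg]
    have hcEn : (c * E) ^ n ≠ 0 := pow_ne_zero _ hcE
    field_simp
    have h1 : c ^ n * E ^ n * c⁻¹ ^ n * E⁻¹ ^ n = 1 := by
      rw [mul_assoc (c ^ n * E ^ n), ← mul_pow c⁻¹, ← mul_pow c, ← mul_pow, ← mul_inv,
        mul_inv_cancel₀ hcE, one_pow]
    linear_combination (c * ↑(Real.cos (θ - c.arg)) + z) ^ n * h1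
  -- periodic shift
  have hper : Function.Periodic g (2 * Real.pi) := fun θ => by
    have h1 : Real.cos (θ + 2 * Real.pi) = Real.cos θ := Real.cos_add_two_pi θ
    simp only [hg, h1]
  have hshift : (∫ θ in (0:ℝ)..2 * Real.pi, g (θ - c.arg)) = ∫ θ in (0:ℝ)..2 * Real.pi, g θ := by
    rw [intervalIntegral.integral_comp_sub_right]
    have := hper.intervalIntegral_add_eq (-c.arg) 0
    simpa [zero_sub, sub_eq_add_neg, add_comm] using this
  -- halving
  have hgcont : Continuous g := by fun_prop
  have hhalf : (∫ θ in (0:ℝ)..2 * Real.pi, g θ) = 2 * ∫ θ in (0:ℝ)..Real.pi, g θ := by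
    have hsplit : (∫ θ in (0:ℝ)..2 * Real.pi, g θ)
        = (∫ θ in (0:ℝ)..Real.pi, g θ) + ∫ θ in Real.pi..2 * Real.pi, g θ := by
      rw [intervalIntegral.integral_add_adjacent_intervals] <;>
        exact hgcont.intervalIntegrable _ _
    have h2 : (∫ θ in Real.pi..2 * Real.pi, g θ) = ∫ θ in (0:ℝ)..Real.pi, g θ := by
      have heq : (∫ θ in Real.pi..2 * Real.pi, g θ)
          = ∫ θ in Real.pi..2 * Real.pi, g (2 * Real.pi - θ) := by
        refine intervalIntegral.integral_congr fun θ _ => ?_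
        have h1 : Real.cos (2 * Real.pi - θ) = Real.cos θ := Real.cos_two_pi_sub θ
        simp only [hg, h1]
      rw [heq, intervalIntegral.integral_comp_sub_left]
      rw [show 2 * Real.pi - 2 * Real.pi = 0 by ring, show 2 * Real.pi - Real.pi = Real.pi by ring]
    rw [hsplit, h2]; ring
  rw [iteratedDeriv_eq_circleIntegral' hf z hR n, hcirc, hshift, hhalf]
  have hπ : (Real.pi : ℂ) ≠ 0 := Complex.ofReal_ne_zero.mpr Real.pi_ne_zero
  have hn : (n ! : ℂ) ≠ 0 := Nat.cast_ne_zero.mpr n.factorial_ne_zero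
  field_simp

/-- The degenerate case `z = ±1`. -/
lemma legendre_main_deg (n : ℕ) (z : ℂ) (hz : z ^ 2 = 1) :
    (1 / (2 ^ n * (n ! : ℂ))) * iteratedDeriv n (fun w : ℂ => (w ^ 2 - 1) ^ n) z = z ^ n := by
  have hf : Differentiable ℂ (fun w : ℂ => (w ^ 2 - 1) ^ n) := by fun_prop
  rw [iteratedDeriv_eq_circleIntegral' hf z one_pos n]
  have hcong : (∮ w in C(z, 1), ((1 : ℂ) / (w - z)) ^ n * ((w - z)⁻¹ * ((w ^ 2 - 1) ^ n)))
      = ∮ w in C(z, 1), (w - z)⁻¹ • ((w + z) ^ n) := by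
    refine circleIntegral.integral_congr zero_le_one fun w hw => ?_
    have hwz : w - z ≠ 0 := by
      intro h
      rw [Metric.mem_sphere] at hw
      simp [sub_eq_zero.mp h] at hw
    have hfac : w ^ 2 - 1 = (w - z) * (w + z) := by linear_combination hz
    rw [hfac, smul_eq_mul, mul_pow]
    field_simp
    rw [← mul_pow, one_div, inv_mul_cancel₀ hwz, one_pow, one_mul]
  have hcauchy : (∮ w in C(z, 1), (w - z)⁻¹ • ((w + z) ^ n))
      = (2 * Real.pi * Complex.I : ℂ) • ((z + z) ^ n) :=
    DifferentiableOn.circleIntegral_sub_inv_smul (by fun_prop) (Metric.mem_ball_self one_pos)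
  rw [hcong, hcauchy, smul_eq_mul]
  have hπ : (Real.pi : ℂ) ≠ 0 := Complex.ofReal_ne_zero.mpr Real.pi_ne_zero
  have hn : (n ! : ℂ) ≠ 0 := Nat.cast_ne_zero.mpr n.factorial_ne_zero
  have h2z : (z + z) ^ n = 2 ^ n * z ^ n := by rw [show z + z = 2 * z by ring, mul_pow]
  rw [h2z]
  field_simp

/-- Schläfli/Laplace integral representation of the Legendre polynomial:
`P_n(z) = (1/π) ∫₀^π (z + √(z²-1) cos t)ⁿ dt`, with the principal branch of the square root. -/
theorem legendre_laplace_integral (n : ℕ) (z : ℂ) :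
    legendre n z =
      (1 / (Real.pi : ℂ)) *
        ∫ t in (0 : ℝ)..Real.pi,
          (z + (z ^ 2 - 1) ^ ((1 : ℂ) / 2) * (Real.cos t : ℂ)) ^ n := by
  rw [legendre]
  by_cases hz : z ^ 2 = 1
  · have h0 : z ^ 2 - 1 = 0 := sub_eq_zero.mpr hz
    have hc0 : (z ^ 2 - 1) ^ ((1 : ℂ) / 2) = 0 := by
      rw [h0, Complex.zero_cpow (by norm_num : (1 : ℂ) / 2 ≠ 0)]
    rw [legendre_main_deg n z hz, hc0]
    have hπ : (Real.pi : ℂ) ≠ 0 := Complex.ofReal_ne_zero.mpr Real.pi_ne_zero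
    simp only [zero_mul, add_zero, intervalIntegral.integral_const, sub_zero]
    rw [Complex.real_smul]
    field_simp
  · have h0 : z ^ 2 - 1 ≠ 0 := sub_ne_zero.mpr hz
    set c : ℂ := (z ^ 2 - 1) ^ ((1 : ℂ) / 2) with hc
    have hc2 : c ^ 2 = z ^ 2 - 1 := by
      rw [hc, show (1 : ℂ) / 2 = ((2 : ℕ) : ℂ)⁻¹ by norm_num]
      exact Complex.cpow_nat_inv_pow _ (by norm_num)
    have hcne : c ≠ 0 := by
      rw [hc, Ne, Complex.cpow_eq_zero_iff]
      push_neg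
      intro h
      exact absurd h h0
    exact legendre_main_ne n z c hc2 hcne
end

section
/- Let A be a symmetric positive semidefinite M×M real matrix with all diagonal entries equal to 1, with eigenvalues λ₁ ≥ λ₂ ≥ ... ≥ λ_M ≥ 0. Fix ε ∈ (0,1) and let N be any natural number such that Σ_{m=N+1}^{M} λ_m ≤ ε² M. Then N ≥ (1-ε²)² M² / tr(A²) = (1-ε²)² M² / Σ_{m,k} a_{mk}². -/
open Matrix

/-- Rank lower bound from eigenvalue tails: let `A` be a symmetric PSD `M×M` matrix with
unit diagonal, spectrally decomposed as `A = Uᵀ diag(λ) U` with `U` orthogonal and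
`λ₁ ≥ ... ≥ λ_M ≥ 0`. If `Σ_{m>N} λ_m ≤ ε² M` for some `ε ∈ (0,1)`, then
`N ≥ (1-ε²)² M² / Σ_{m,k} a_{mk}²` (note `tr(A²) = Σ_{m,k} a_{mk}²`). -/
theorem eigenvalue_tail_rank_bound (M : ℕ) (hM : 0 < M)
    (A : Matrix (Fin M) (Fin M) ℝ) (lam : Fin M → ℝ)
    (U : Matrix (Fin M) (Fin M) ℝ) (hU : U ∈ Matrix.orthogonalGroup (Fin M) ℝ)
    (hA : A = Uᵀ * Matrix.diagonal lam * U)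
    (hmono : Antitone lam) (hnonneg : ∀ m, 0 ≤ lam m)
    (hdiag : ∀ m, A m m = 1)
    (ε : ℝ) (hε : ε ∈ Set.Ioo (0 : ℝ) 1)
    (N : ℕ)
    (hN : ∑ m ∈ Finset.univ.filter (fun m : Fin M => N ≤ (m : ℕ)), lam m ≤ ε ^ 2 * M) :
    (1 - ε ^ 2) ^ 2 * (M : ℝ) ^ 2 / (∑ m, ∑ k, (A m k) ^ 2) ≤ N := by
  have hUU : U * Uᵀ = 1 := by
    have := (Matrix.mem_orthogonalGroup_iff (Fin M) ℝ).mp hU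
    simpa [Matrix.star_eq_conjTranspose] using this
  -- A is symmetric
  have hsymm : Aᵀ = A := by
    rw [hA]
    simp [Matrix.transpose_mul, Matrix.mul_assoc, Matrix.diagonal_transpose]
  -- trace A = ∑ λ
  have htrace : ∑ m, lam m = (M : ℝ) := by
    have h1 : A.trace = (M : ℝ) := by
      simp [Matrix.trace, Matrix.diag, hdiag]
    have h2 : A.trace = ∑ m, lam m := by
      rw [hA, Matrix.trace_mul_cycle, hUU, Matrix.one_mul, Matrix.trace_diagonal]
    linarith
  -- ∑ a² = ∑ λ²
  have hsq : (∑ m, ∑ k, (A m k) ^ 2) = ∑ m, (lam m) ^ 2 := by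
    have hAA : (A * A).trace = ∑ m, (lam m) ^ 2 := by
      have : A * A = Uᵀ * (Matrix.diagonal (fun m => lam m ^ 2)) * U := by
        rw [hA]
        rw [show Uᵀ * Matrix.diagonal lam * U * (Uᵀ * Matrix.diagonal lam * U)
            = Uᵀ * (Matrix.diagonal lam * ((U * Uᵀ) * Matrix.diagonal lam)) * U by
          simp only [Matrix.mul_assoc]]
        rw [hUU, Matrix.one_mul, Matrix.diagonal_mul_diagonal]
        congr 1
        congr 1
        congr 1
        ext m; ring
      rw [this, Matrix.trace_mul_cycle, hUU, Matrix.one_mul, Matrix.trace_diagonal]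
    rw [← hAA]
    simp only [Matrix.trace, Matrix.diag, Matrix.mul_apply]
    rw [Finset.sum_comm]
    apply Finset.sum_congr rfl
    intro m _
    apply Finset.sum_congr rfl
    intro k _
    have : A k m = A m k := by
      calc A k m = Aᵀ m k := (Matrix.transpose_apply A m k).symm
        _ = A m k := by rw [hsymm]
    rw [this]; ring
  obtain ⟨hε0, hε1⟩ := hε
  have hMpos : (0 : ℝ) < M := by exact_mod_cast hM
  -- the head sum
  set S := Finset.univ.filter (fun m : Fin M => (m : ℕ) < N) with hS
  have hsplit : ∑ m ∈ S, lam m + ∑ m ∈ Finset.univ.filter (fun m : Fin M => N ≤ (m : ℕ)), lam m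
      = ∑ m, lam m := by
    rw [hS, ← Finset.sum_filter_add_sum_filter_not Finset.univ (fun m : Fin M => (m : ℕ) < N) lam]
    congr 1
    apply Finset.sum_congr _ (fun _ _ => rfl)
    apply Finset.filter_congr
    intro x _
    simp [not_lt]
  have hhead : (1 - ε ^ 2) * M ≤ ∑ m ∈ S, lam m := by
    have := hN
    nlinarith [hsplit, htrace]
  have hheadnn : (0 : ℝ) ≤ ∑ m ∈ S, lam m :=
    Finset.sum_nonneg fun m _ => hnonneg m
  have hcs : (∑ m ∈ S, lam m) ^ 2 ≤ S.card * ∑ m ∈ S, (lam m) ^ 2 :=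
    sq_sum_le_card_mul_sum_sq
  have hcard : (S.card : ℝ) ≤ N := by
    have : S.card ≤ N := by
      have : S.card ≤ (Finset.range N).card := by
        refine Finset.card_le_card_of_injOn (fun m => (m : ℕ)) ?_ ?_
        · intro m hm; simp only [hS, Finset.mem_coe, Finset.mem_filter] at hm; simp [hm.2]
        · intro a _ b _ hab; exact Fin.ext hab
      simpa using this
    exact_mod_cast this
  have hsub : ∑ m ∈ S, (lam m) ^ 2 ≤ ∑ m, (lam m) ^ 2 :=
    Finset.sum_le_sum_of_subset_of_nonneg (Finset.subset_univ S)
      (fun m _ _ => sq_nonneg _)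
  have hsqsumnn : (0 : ℝ) ≤ ∑ m, (lam m) ^ 2 := Finset.sum_nonneg fun m _ => sq_nonneg _
  have hkey : ((1 - ε ^ 2) * M) ^ 2 ≤ (N : ℝ) * ∑ m, (lam m) ^ 2 := by
    calc ((1 - ε ^ 2) * M) ^ 2 ≤ (∑ m ∈ S, lam m) ^ 2 := by
          have h1 : (0:ℝ) < 1 - ε ^ 2 := by nlinarith [mul_pos hε0 hε0]
          apply pow_le_pow_left₀ (by nlinarith) hhead
      _ ≤ S.card * ∑ m ∈ S, (lam m) ^ 2 := hcs
      _ ≤ (N : ℝ) * ∑ m, (lam m) ^ 2 := by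
          apply mul_le_mul hcard hsub (Finset.sum_nonneg fun m _ => sq_nonneg _)
            (Nat.cast_nonneg N)
  -- denominator positive
  have hden : (0 : ℝ) < ∑ m, (lam m) ^ 2 := by
    rcases lt_or_eq_of_le hsqsumnn with h | h
    · exact h
    · exfalso
      have : ∀ m, lam m = 0 := by
        intro m
        have := (Finset.sum_eq_zero_iff_of_nonneg (fun m _ => sq_nonneg (lam m))).mp h.symm
          m (Finset.mem_univ m)
        exact pow_eq_zero_iff (by norm_num) |>.mp this
      rw [Finset.sum_congr rfl (fun m _ => this m)] at htrace
      simp at htrace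
      linarith
  rw [hsq, div_le_iff₀ hden]
  calc (1 - ε ^ 2) ^ 2 * (M : ℝ) ^ 2 = ((1 - ε ^ 2) * M) ^ 2 := by ring
    _ ≤ (N : ℝ) * ∑ m, (lam m) ^ 2 := hkey
end
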